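/- arXiv:0811.3219 — 3 statements merged into one kernel-verified Lean document; each statement's English description precedes it below -/
import Mathlib

section
/- Let F' be a field and consider the field of Laurent series F'((u)) with the u-adic valuation v_u normalized by v_u(u) = 1. Given integers s1, t1, s2, t2 and v1, v2 ∈ F'((u)), there exists a matrix B ∈ GL₂(F'[[u]]) such that B · [[u^{s1}, v1],[0, u^{t1}]] = [[u^{s2}, v2],[0, u^{t2}]] if and only if s1 = s2, t1 = t2, and v1 - v2 ∈ u^{t1} F'[[u]]. -/
/-!
Comparing entries, the lower-left entry of `B` must vanish, so its diagonal entries are units of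
`F'[[u]]`. A unit power series that equals `u^k` in `F'((u))` forces `k = 0` and the unit to be `1`,
which yields `s1 = s2`, `t1 = t2`, and `v1 - v2 = -u^{t1} b` for the upper-right entry `b` of `B`.
Conversely `B = [[1, -f], [0, 1]]` does the job.
-/

open HahnSeries PowerSeries Matrix.GeneralLinearGroup

theorem ofPowerSeries_eq_single_one_iff {R : Type*} [CommRing R] [Nontrivial R]
    {a : PowerSeries R} (ha : IsUnit a) {k : ℤ} :
    ofPowerSeries ℤ R a = single k 1 ↔ k = 0 ∧ a = 1 := by
  refine ⟨fun h => ?_, by rintro ⟨rfl, rfl⟩; simp⟩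
  have hk : 0 ≤ k := by
    by_contra! hk
    simpa [PowerSeries.coeff_coe, hk] using congrArg (HahnSeries.coeff · k) h
  lift k to ℕ using hk
  rw [← ofPowerSeries_X_pow] at h
  obtain rfl := ofPowerSeries_injective h
  obtain rfl : k = 0 := by
    by_contra hk
    simpa [hk] using ha.map constantCoeff
  simp

theorem ofPowerSeries_mul_zpow_eq_zpow_iff {F : Type*} [Field F] {a : PowerSeries F}
    (ha : IsUnit a) {s s' : ℤ} :
    ofPowerSeries ℤ F a * single 1 1 ^ s = single 1 1 ^ s' ↔ s = s' ∧ a = 1 := by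
  have hu : (single 1 1 : LaurentSeries F) ≠ 0 := single_ne_zero one_ne_zero
  rw [← eq_div_iff (zpow_ne_zero s hu), ← zpow_sub₀ hu, ← RatFunc.single_zpow,
    ofPowerSeries_eq_single_one_iff ha, sub_eq_zero, eq_comm]

theorem Matrix.GeneralLinearGroup.isUnit_diag_of_apply_one_zero_eq_zero {R : Type*} [CommRing R]
    (B : GL (Fin 2) R) (h : B 1 0 = 0) : IsUnit (B 0 0) ∧ IsUnit (B 1 1) := by
  have hdet : IsUnit (B 0 0 * B 1 1) := by
    simpa [Matrix.det_fin_two, h] using (det B).isUnit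
  exact ⟨isUnit_of_mul_isUnit_left hdet, isUnit_of_mul_isUnit_right hdet⟩

theorem Matrix.mul_upperTriangular_fin_two_eq_iff {R : Type*} [CommRing R]
    (M : Matrix (Fin 2) (Fin 2) R) (x v y x' v' y' : R) :
    M * !![x, v; 0, y] = !![x', v'; 0, y'] ↔
      M 0 0 * x = x' ∧ M 0 0 * v + M 0 1 * y = v' ∧ M 1 0 * x = 0 ∧
        M 1 0 * v + M 1 1 * y = y' := by
  rw [M.eta_fin_two, Matrix.mul_fin_two]
  simp [and_assoc]

/-- Lemma 1.3 of the paper: a change of basis matrix `B ∈ GL₂(F'[[u]])` transforms the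
upper triangular lattice matrix `[[u^{s1}, v1],[0, u^{t1}]]` into
`[[u^{s2}, v2],[0, u^{t2}]]` if and only if `s1 = s2`, `t1 = t2` and
`v1 - v2 ∈ u^{t1} F'[[u]]`. -/
theorem stmt_3 (F' : Type*) [Field F'] (s1 t1 s2 t2 : ℤ) (v1 v2 : LaurentSeries F') :
    (∃ B : Matrix.GeneralLinearGroup (Fin 2) (PowerSeries F'),
      ((B : Matrix (Fin 2) (Fin 2) (PowerSeries F')).map
          (HahnSeries.ofPowerSeries ℤ F')) *
        !![(HahnSeries.single (1 : ℤ) (1 : F') : LaurentSeries F') ^ s1, v1;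
           0, (HahnSeries.single (1 : ℤ) (1 : F') : LaurentSeries F') ^ t1] =
      !![(HahnSeries.single (1 : ℤ) (1 : F') : LaurentSeries F') ^ s2, v2;
         0, (HahnSeries.single (1 : ℤ) (1 : F') : LaurentSeries F') ^ t2]) ↔
    (s1 = s2 ∧ t1 = t2 ∧ ∃ f : PowerSeries F',
      v1 - v2 = (HahnSeries.single (1 : ℤ) (1 : F') : LaurentSeries F') ^ t1 *
        HahnSeries.ofPowerSeries ℤ F' f) := by
  simp only [Matrix.mul_upperTriangular_fin_two_eq_iff, Matrix.map_apply]
  constructor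
  · rintro ⟨B, h00, h01, h10, h11⟩
    have hc : B 1 0 = 0 := (map_eq_zero_iff _ ofPowerSeries_injective).1 <|
      (mul_eq_zero.1 h10).resolve_right (zpow_ne_zero _ (single_ne_zero one_ne_zero))
    obtain ⟨ha, hd⟩ := B.isUnit_diag_of_apply_one_zero_eq_zero hc
    rw [hc, map_zero, zero_mul, zero_add] at h11
    obtain ⟨rfl, ha1⟩ := (ofPowerSeries_mul_zpow_eq_zpow_iff ha).1 h00
    obtain ⟨rfl, -⟩ := (ofPowerSeries_mul_zpow_eq_zpow_iff hd).1 h11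
    refine ⟨rfl, rfl, -B 0 1, ?_⟩
    rw [ha1, map_one, one_mul] at h01
    rw [map_neg]
    linear_combination h01
  · rintro ⟨rfl, rfl, f, hf⟩
    refine ⟨upperRightHom (-f), ?_⟩
    simp only [upperRightHom_apply, Matrix.of_apply, Matrix.cons_val', Matrix.cons_val_zero,
      Matrix.cons_val_one, Matrix.cons_val_fin_one, map_one, map_neg, map_zero, one_mul, neg_mul,
      zero_mul, zero_add, and_self, and_true, true_and]
    linear_combination hf
end

section
/- Let p > 2 be prime and write e = (p+1)e0 + e1 with integers e0 ≥ 0 and 0 ≤ e1 ≤ p. Let n ≥ 1 and let (c_i)_{i∈ℤ/nℤ} be nonnegative integers satisfying: (A) if c_i = e0 + l for some l ≥ 1 then c_{i+1} ≤ e0 + e1 - p*l + 1, and (B) if c_i = e0 + 1 and c_{i+1} = e0 + e1 - p + 1 then c_{i+2} ≤ e0 - (p-1)*e1 + 1. If 0 ≤ e1 ≤ p-2, then the sum of the c_i over i ∈ ℤ/nℤ is at most n*e0. -/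
/-!
Put `d i = c i - e0`. By (A) with `l = d i`, and `e1 + 1 ≤ p - 1`, every excess `d i > 0` is
followed by a deficit `d (i + 1) ≤ -d i`. Hence `d (i + 1) ≤ (d (i + 1))⁺ - (d i)⁺` for every `i`,
and summing this telescoping bound around the cycle gives `∑ d i ≤ 0`.
-/

section Telescoping

variable {α M : Type*} [Fintype α] [AddCommGroup M] [LinearOrder M] [IsOrderedAddMonoid M]

lemma le_posPart_sub_posPart_of_le_neg {a b : M} (h : 0 < a → b ≤ -a) :
    b ≤ b⁺ - a⁺ := by
  rcases le_or_gt a 0 with ha | ha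
  · simpa [posPart_eq_zero.mpr ha] using le_posPart b
  · have hb : b ≤ 0 := (h ha).trans (neg_nonpos.mpr ha.le)
    simpa [posPart_eq_zero.mpr hb, posPart_eq_self.mpr ha.le] using h ha

lemma sum_nonpos_of_apply_equiv_le_neg (σ : α ≃ α) (f : α → M)
    (h : ∀ i, 0 < f i → f (σ i) ≤ -f i) :
    ∑ i, f i ≤ 0 := by
  calc ∑ i, f i = ∑ i, f (σ i) := (σ.sum_comp f).symm
    _ ≤ ∑ i, ((f (σ i))⁺ - (f i)⁺) :=
      Finset.sum_le_sum fun i _ => le_posPart_sub_posPart_of_le_neg (h i)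
    _ = 0 := by rw [Finset.sum_sub_distrib, σ.sum_comp (fun i => (f i)⁺), sub_self]

end Telescoping

theorem stmt_7_general (p e0 e1 : ℤ)
    (he1 : 0 ≤ e1) (he1' : e1 ≤ p - 2)
    (n : ℕ) [NeZero n] (c : ZMod n → ℤ)
    (hA : ∀ i, ∀ l : ℤ, 1 ≤ l → c i = e0 + l → c (i + 1) ≤ e0 + e1 - p * l + 1) :
    ∑ i : ZMod n, c i ≤ n * e0 := by
  have hdrop : ∀ i, 0 < c i - e0 → c (i + 1) - e0 ≤ -(c i - e0) := fun i hi => by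
    have := hA i (c i - e0) hi (by ring)
    nlinarith
  have hsum := sum_nonpos_of_apply_equiv_le_neg (Equiv.addRight 1) (fun i => c i - e0) hdrop
  simp only [Finset.sum_sub_distrib, Finset.sum_const, Finset.card_univ, ZMod.card,
    nsmul_eq_mul] at hsum
  linarith

theorem stmt_7 (p e e0 e1 : ℤ) (hp : Prime p) (hp2 : 2 < p)
    (he0 : 0 ≤ e0) (he1 : 0 ≤ e1) (he1' : e1 ≤ p - 2)
    (he : e = (p + 1) * e0 + e1)
    (n : ℕ) [NeZero n] (hn : 1 ≤ n) (c : ZMod n → ℤ) (hc : ∀ i, 0 ≤ c i)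
    (hA : ∀ i, ∀ l : ℤ, 1 ≤ l → c i = e0 + l → c (i + 1) ≤ e0 + e1 - p * l + 1)
    (hB : ∀ i, c i = e0 + 1 → c (i + 1) = e0 + e1 - p + 1 →
      c (i + 2) ≤ e0 - (p - 1) * e1 + 1) :
    ∑ i : ZMod n, c i ≤ n * e0 :=
  stmt_7_general p e0 e1 he1 he1' n c hA
end

section
/- Let p > 2 be prime, e0 ≥ 0 an integer, e1 = p, and n ≥ 2. Let (c_i)_{i∈ℤ/nℤ} be nonnegative integers satisfying: (A) if c_i = e0 + l for some l ≥ 1 then c_{i+1} ≤ e0 - p*(l-1) + 1, and (B) if c_i = e0 + 1 and c_{i+1} = e0 + 1 then c_{i+2} ≤ e0 - 5. Then ∑_{i∈ℤ/nℤ} c_i ≤ n*e0 + ⌊n/2⌋. -/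
/-!
Write `d i = c i - e0` for the excess over `e0`. Attach to each consecutive pair the potential
`g i = wildPotential (d i) (d (i + 1))`; then `2 d (i + 1) - 1 ≤ g i - g (i + 1)` for every `i`,
and around the cycle the right-hand sides sum to zero, so `2 ∑ d i ≤ n`.
-/

/-- An excess `a ≥ 2` is charged against the deficit that (A) forces on its successor, and a run
`1, 1` of excesses against the deficit forced by (B). -/
def wildPotential (a b : ℤ) : ℤ :=
  if 1 ≤ b then (if a = 1 then 0 else 1)
  else if 2 ≤ a then 2 - 2 * a
  else if a = 1 ∧ b ≤ -1 then -1
  else 0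

lemma two_mul_le_one_add_wildPotential_sub {p a b c : ℤ} (hp : 2 ≤ p)
    (hab : 1 ≤ a → b ≤ 1 - p * (a - 1))
    (hbc : 1 ≤ b → c ≤ 1 - p * (b - 1))
    (habc : a = 1 → b = 1 → c ≤ -5) :
    2 * b ≤ 1 + wildPotential a b - wildPotential b c := by
  have hpa : 1 ≤ a → 2 * (a - 1) ≤ p * (a - 1) := fun h => by nlinarith
  have hpb : 1 ≤ b → 2 * (b - 1) ≤ p * (b - 1) := fun h => by nlinarith
  -- abstracting the products leaves a linear problem for each branch of the potential
  generalize p * (a - 1) = q at hab hpa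
  generalize p * (b - 1) = r at hbc hpb
  unfold wildPotential
  split_ifs <;> omega

lemma two_mul_sum_le_card_of_potential {G : Type*} [AddGroup G] [Fintype G] (s : G)
    (d g : G → ℤ) (h : ∀ i, 2 * d (i + s) ≤ 1 + g i - g (i + s)) :
    2 * ∑ i, d i ≤ Fintype.card G := by
  have hshift (f : G → ℤ) : ∑ i, f (i + s) = ∑ i, f i := Equiv.sum_comp (Equiv.addRight s) f
  calc 2 * ∑ i, d i = 2 * ∑ i, d (i + s) := by rw [hshift]
    _ ≤ ∑ i, (1 + g i - g (i + s)) := by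
        rw [Finset.mul_sum]; exact Finset.sum_le_sum fun i _ => h i
    _ = Fintype.card G := by
        rw [Finset.sum_sub_distrib, Finset.sum_add_distrib, hshift]; simp

theorem two_mul_sum_le_card_of_wild {G : Type*} [AddGroupWithOne G] [Fintype G] {p : ℤ}
    (hp : 2 ≤ p) (d : G → ℤ) (hA : ∀ i, 1 ≤ d i → d (i + 1) ≤ 1 - p * (d i - 1))
    (hB : ∀ i, d i = 1 → d (i + 1) = 1 → d (i + 2) ≤ -5) :
    2 * ∑ i, d i ≤ Fintype.card G := by
  refine two_mul_sum_le_card_of_potential 1 d (fun i => wildPotential (d i) (d (i + 1)))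
    fun i => ?_
  have hB' := hB i
  rw [← one_add_one_eq_two, ← add_assoc] at hB'
  exact two_mul_le_one_add_wildPotential_sub hp (hA i) (hA (i + 1)) hB'

theorem stmt_9_general (p e0 : ℤ) (hp2 : 2 < p)
    (n : ℕ) [NeZero n] (c : ZMod n → ℤ)
    (hA : ∀ i, ∀ l : ℤ, 1 ≤ l → c i = e0 + l → c (i + 1) ≤ e0 - p * (l - 1) + 1)
    (hB : ∀ i, c i = e0 + 1 → c (i + 1) = e0 + 1 → c (i + 2) ≤ e0 - 5) :
    ∑ i : ZMod n, c i ≤ n * e0 + (n / 2 : ℕ) := by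
  have h := two_mul_sum_le_card_of_wild hp2.le (fun i => c i - e0)
    (fun i hi => by linarith [hA i (c i - e0) hi (by ring)])
    (fun i h0 h1 => by linarith [hB i (by linarith) (by linarith)])
  simp only [Finset.sum_sub_distrib, Finset.sum_const, Finset.card_univ, ZMod.card,
    nsmul_eq_mul] at h
  omega

theorem stmt_9 (p e0 e1 : ℤ) (hp : Prime p) (hp2 : 2 < p)
    (he0 : 0 ≤ e0) (he1 : e1 = p)
    (n : ℕ) [NeZero n] (hn : 2 ≤ n) (c : ZMod n → ℤ) (hc : ∀ i, 0 ≤ c i)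
    (hA : ∀ i, ∀ l : ℤ, 1 ≤ l → c i = e0 + l → c (i + 1) ≤ e0 - p * (l - 1) + 1)
    (hB : ∀ i, c i = e0 + 1 → c (i + 1) = e0 + 1 → c (i + 2) ≤ e0 - 5) :
    ∑ i : ZMod n, c i ≤ n * e0 + (n / 2 : ℕ) :=
  stmt_9_general p e0 hp2 n c hA hB
end
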